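/- arXiv:2307.15940 — 5 statements merged into one kernel-verified Lean document; each statement's English description precedes it below -/
import Mathlib

section
/- Let W : ℝⁿ → ℝ be a function of the form W(t) = Σ_{j=1}^c a_j exp(⟨t, b_j⟩) where all a_j > 0 and b_j ∈ ℝⁿ. If the convex hull of {b_1, ..., b_c} contains the origin in its interior, then W is strictly convex (when the b_j span ℝⁿ), tends to +∞ as |t| → ∞, and attains a global minimum at a unique point. -/
open Set Filter RealInnerProductSpace

private lemma key_sep {n c : ℕ} {b : Fin c → EuclideanSpace ℝ (Fin n)}
    (hb : (0 : EuclideanSpace ℝ (Fin n)) ∈ interior (convexHull ℝ (Set.range b)))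
    {v : EuclideanSpace ℝ (Fin n)} (hv : v ≠ 0) (h : ∀ j, ⟪v, b j⟫ = 0) : False := by
  have hsub : convexHull ℝ (Set.range b) ⊆ {w | ⟪v, w⟫ = (0 : ℝ)} := by
    apply convexHull_min
    · rintro _ ⟨j, rfl⟩; exact h j
    · have : Convex ℝ {w : EuclideanSpace ℝ (Fin n) | ⟪v, w⟫ = (0 : ℝ)} := by
        exact convex_hyperplane (innerSL (𝕜 := ℝ) v).toLinearMap.isLinear 0
      exact this
  have h0 : (0 : EuclideanSpace ℝ (Fin n)) ∈ interior {w : EuclideanSpace ℝ (Fin n) | ⟪v, w⟫ = (0 : ℝ)} :=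
    interior_mono hsub hb
  rw [mem_interior_iff_mem_nhds, Metric.mem_nhds_iff] at h0
  obtain ⟨ε, hε, hball⟩ := h0
  have hvnorm : (0 : ℝ) < ‖v‖ := norm_pos_iff.mpr hv
  set w : EuclideanSpace ℝ (Fin n) := (ε / 2 / ‖v‖) • v with hw
  have hwmem : w ∈ Metric.ball (0 : EuclideanSpace ℝ (Fin n)) ε := by
    rw [Metric.mem_ball, dist_zero_right, hw, norm_smul]
    rw [Real.norm_eq_abs, abs_of_pos (by positivity)]
    rw [div_mul_cancel₀ _ (ne_of_gt hvnorm)]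
    linarith
  have := hball hwmem
  simp only [Set.mem_setOf_eq, hw, real_inner_smul_right, real_inner_self_eq_norm_sq] at this
  have : ε / 2 / ‖v‖ * ‖v‖ ^ 2 > 0 := by positivity
  linarith [hball hwmem]

/-- A positive exponential sum `W(t) = Σⱼ aⱼ exp⟨t, bⱼ⟩` whose Newton polytope
(the convex hull of the exponents `bⱼ`) contains the origin in its interior is
strictly convex, tends to `+∞` at infinity, and attains its global minimum at a
unique point. -/
theorem expSum_strictConvex_and_unique_min
    {n c : ℕ} (a : Fin c → ℝ) (b : Fin c → EuclideanSpace ℝ (Fin n))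
    (ha : ∀ j, 0 < a j)
    (hb : (0 : EuclideanSpace ℝ (Fin n)) ∈ interior (convexHull ℝ (Set.range b)))
    (W : EuclideanSpace ℝ (Fin n) → ℝ)
    (hW : ∀ t, W t = ∑ j, a j * Real.exp (⟪t, b j⟫)) :
    StrictConvexOn ℝ Set.univ W ∧
    Tendsto W (Filter.cocompact _) Filter.atTop ∧
    ∃! t₀ : EuclideanSpace ℝ (Fin n), ∀ t, W t₀ ≤ W t := by
  -- `c` is positive
  have hc : Nonempty (Fin c) := by
    rcases isEmpty_or_nonempty (Fin c) with h | h
    · exfalso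
      have : Set.range b = ∅ := Set.range_eq_empty b
      rw [this] at hb
      simp at hb
    · exact h
  -- Strict convexity
  have hconv : StrictConvexOn ℝ Set.univ W := by
    refine ⟨convex_univ, fun x _ y _ hxy p q hp hq hpq => ?_⟩
    have hne : ∃ j, ⟪x, b j⟫ ≠ ⟪y, b j⟫ := by
      by_contra hcon
      push_neg at hcon
      refine key_sep hb (v := x - y) (sub_ne_zero.mpr hxy) fun j => ?_
      rw [inner_sub_left, hcon j, sub_self]
    obtain ⟨j₀, hj₀⟩ := hne
    rw [hW, hW, hW]
    have hterm : ∀ j, a j * Real.exp (⟪p • x + q • y, b j⟫) ≤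
        p • (a j * Real.exp ⟪x, b j⟫) + q • (a j * Real.exp ⟪y, b j⟫) := by
      intro j
      have : Real.exp (p * ⟪x, b j⟫ + q * ⟪y, b j⟫) ≤
          p * Real.exp ⟪x, b j⟫ + q * Real.exp ⟪y, b j⟫ := by
        have := convexOn_exp.2 (Set.mem_univ ⟪x, b j⟫) (Set.mem_univ ⟪y, b j⟫)
          hp.le hq.le hpq
        simpa using this
      rw [inner_add_left, real_inner_smul_left, real_inner_smul_left]
      calc a j * Real.exp (p * ⟪x, b j⟫ + q * ⟪y, b j⟫)
          ≤ a j * (p * Real.exp ⟪x, b j⟫ + q * Real.exp ⟪y, b j⟫) :=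
            mul_le_mul_of_nonneg_left this (ha j).le
        _ = p • (a j * Real.exp ⟪x, b j⟫) + q • (a j * Real.exp ⟪y, b j⟫) := by
            simp [smul_eq_mul]; ring
    have hstrict : a j₀ * Real.exp (⟪p • x + q • y, b j₀⟫) <
        p • (a j₀ * Real.exp ⟪x, b j₀⟫) + q • (a j₀ * Real.exp ⟪y, b j₀⟫) := by
      have : Real.exp (p * ⟪x, b j₀⟫ + q * ⟪y, b j₀⟫) <
          p * Real.exp ⟪x, b j₀⟫ + q * Real.exp ⟪y, b j₀⟫ := by
        have := strictConvexOn_exp.2 (Set.mem_univ ⟪x, b j₀⟫) (Set.mem_univ ⟪y, b j₀⟫)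
          hj₀ hp hq hpq
        simpa using this
      rw [inner_add_left, real_inner_smul_left, real_inner_smul_left]
      calc a j₀ * Real.exp (p * ⟪x, b j₀⟫ + q * ⟪y, b j₀⟫)
          < a j₀ * (p * Real.exp ⟪x, b j₀⟫ + q * Real.exp ⟪y, b j₀⟫) :=
            (mul_lt_mul_iff_right₀ (ha j₀)).mpr this
        _ = p • (a j₀ * Real.exp ⟪x, b j₀⟫) + q • (a j₀ * Real.exp ⟪y, b j₀⟫) := by
            simp [smul_eq_mul]; ring
    calc ∑ j, a j * Real.exp (⟪p • x + q • y, b j⟫)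
        < ∑ j, (p • (a j * Real.exp ⟪x, b j⟫) + q • (a j * Real.exp ⟪y, b j⟫)) :=
          Finset.sum_lt_sum (fun j _ => hterm j) ⟨j₀, Finset.mem_univ j₀, hstrict⟩
      _ = p • ∑ j, a j * Real.exp ⟪x, b j⟫ + q • ∑ j, a j * Real.exp ⟪y, b j⟫ := by
          rw [Finset.sum_add_distrib, ← Finset.smul_sum, ← Finset.smul_sum]
  -- Coercivity
  obtain ⟨ε, hε, hball⟩ : ∃ ε > 0, Metric.ball (0 : EuclideanSpace ℝ (Fin n)) ε ⊆
      convexHull ℝ (Set.range b) := by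
    rw [mem_interior_iff_mem_nhds, Metric.mem_nhds_iff] at hb
    exact hb
  -- min of a
  obtain ⟨jm, -, hjm⟩ := Finset.exists_min_image Finset.univ a (Finset.univ_nonempty)
  set m := a jm with hm
  have hmpos : 0 < m := ha jm
  have hbound : ∀ t, m * Real.exp (ε / 2 * ‖t‖) ≤ W t := by
    intro t
    -- find x in convex hull with ⟪t, x⟫ = ε/2 * ‖t‖
    have hx : ∃ x ∈ convexHull ℝ (Set.range b), ⟪t, x⟫ = ε / 2 * ‖t‖ := by
      rcases eq_or_ne t 0 with rfl | ht
      · exact ⟨0, hball (by simp [hε]), by simp⟩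
      · have hnt : (0 : ℝ) < ‖t‖ := norm_pos_iff.mpr ht
        refine ⟨(ε / 2 / ‖t‖) • t, hball ?_, ?_⟩
        · rw [Metric.mem_ball, dist_zero_right, norm_smul, Real.norm_eq_abs,
            abs_of_pos (by positivity), div_mul_cancel₀ _ (ne_of_gt hnt)]
          linarith
        · rw [real_inner_smul_right, real_inner_self_eq_norm_sq]
          field_simp
    obtain ⟨x, hxmem, hxval⟩ := hx
    -- max of ⟪t, b j⟫
    obtain ⟨j₀, -, hj₀⟩ := Finset.exists_max_image Finset.univ (fun j => ⟪t, b j⟫)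
      Finset.univ_nonempty
    have hmax : ⟪t, x⟫ ≤ ⟪t, b j₀⟫ := by
      have hsub : convexHull ℝ (Set.range b) ⊆ {w | ⟪t, w⟫ ≤ ⟪t, b j₀⟫} := by
        apply convexHull_min
        · rintro _ ⟨j, rfl⟩; exact hj₀ j (Finset.mem_univ j)
        · exact convex_halfSpace_le (innerSL (𝕜 := ℝ) t).toLinearMap.isLinear _
      exact hsub hxmem
    calc m * Real.exp (ε / 2 * ‖t‖)
        = m * Real.exp ⟪t, x⟫ := by rw [hxval]
      _ ≤ a j₀ * Real.exp ⟪t, b j₀⟫ := by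
          apply mul_le_mul (hjm j₀ (Finset.mem_univ j₀)) (Real.exp_le_exp.mpr hmax)
            (Real.exp_pos _).le (ha j₀).le
      _ ≤ W t := by
          rw [hW]
          exact Finset.single_le_sum (f := fun j => a j * Real.exp ⟪t, b j⟫) (fun j _ => mul_nonneg (ha j).le (Real.exp_pos _).le) (Finset.mem_univ j₀)
  have htend : Tendsto W (cocompact _) atTop := by
    apply tendsto_atTop_mono hbound
    have h1 : Tendsto (fun t : EuclideanSpace ℝ (Fin n) => ‖t‖) (cocompact _) atTop :=
      tendsto_norm_cocompact_atTop
    have h2 : Tendsto (fun s : ℝ => m * Real.exp (ε / 2 * s)) atTop atTop := by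
      apply Tendsto.const_mul_atTop hmpos
      exact Real.tendsto_exp_atTop.comp (Tendsto.const_mul_atTop (by linarith) tendsto_id)
    exact h2.comp h1
  -- continuity of W
  have hWc : Continuous W := by
    have : W = fun t => ∑ j, a j * Real.exp (⟪t, b j⟫) := funext hW
    rw [this]
    exact continuous_finset_sum _ fun j _ =>
      (continuous_const.mul (Real.continuous_exp.comp
        ((continuous_id.inner continuous_const))))
  obtain ⟨t₀, ht₀⟩ := hWc.exists_forall_le htend
  refine ⟨hconv, htend, t₀, ht₀, fun t₁ ht₁ => ?_⟩
  by_contra hne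
  have hmid := hconv.2 (Set.mem_univ t₁) (Set.mem_univ t₀) hne
    (by norm_num : (0:ℝ) < 1/2) (by norm_num : (0:ℝ) < 1/2) (by norm_num)
  have h1 : W t₀ ≤ W ((1/2 : ℝ) • t₁ + (1/2 : ℝ) • t₀) := ht₀ _
  have h2 : W t₁ = W t₀ := le_antisymm (ht₁ t₀) (ht₀ t₁)
  rw [smul_eq_mul, smul_eq_mul, h2] at hmid
  linarith
end

section
/- Let W : ℝⁿ → ℝ be given by W(t) = Σ_{j=1}^c a_j exp(⟨t, b_j⟩) with all a_j > 0 and with 0 in the interior of the convex hull of {b_1,...,b_c}. Then for every z > 0, the integral ∫_{ℝⁿ} e^{-W(t)/z} dt converges. -/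
open Set Filter MeasureTheory RealInnerProductSpace

lemma aux_integrable_exp_neg_norm {n : ℕ} {k : ℝ} (hk : 0 < k) :
    Integrable (fun t : EuclideanSpace ℝ (Fin n) => Real.exp (-(k * ‖t‖))) volume := by
  have hnr : ((Module.finrank ℝ (EuclideanSpace ℝ (Fin n))) : ℝ) < ((n + 1 : ℕ) : ℝ) := by
    simp [finrank_euclideanSpace]
  have hint := integrable_one_add_norm (E := EuclideanSpace ℝ (Fin n)) (μ := volume) hnr
  set M : ℝ := max ((n + 1) / k) 1 with hM
  have hM1 : (1 : ℝ) ≤ M := le_max_right _ _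
  have hM0 : (0 : ℝ) < M := lt_of_lt_of_le one_pos hM1
  refine (hint.const_mul (M ^ (n + 1))).mono' ?_ ?_
  · exact (Real.continuous_exp.comp
      ((continuous_const.mul continuous_norm).neg)).aestronglyMeasurable
  · refine Eventually.of_forall fun x => ?_
    have hs : (0 : ℝ) ≤ ‖x‖ := norm_nonneg x
    set s : ℝ := ‖x‖
    rw [Real.norm_eq_abs, abs_of_pos (Real.exp_pos _), Real.rpow_neg (by positivity),
      Real.rpow_natCast]
    have key : (1 + s) ^ (n + 1) ≤ M ^ (n + 1) * Real.exp (k * s) := by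
      have h1 : 1 + s ≤ M * Real.exp (k * s / (n + 1)) := by
        have h2 : 1 + k * s / (n + 1) ≤ Real.exp (k * s / (n + 1)) := by
          have := Real.add_one_le_exp (k * s / (n + 1)); linarith
        have h3 : 1 + s ≤ M * (1 + k * s / (n + 1)) := by
          have hMk : (n + 1) / k ≤ M := le_max_left _ _
          rw [div_le_iff₀ hk] at hMk
          have hnp : (0:ℝ) < (n:ℝ) + 1 := by positivity
          have hs' : s ≤ M * (k * s / (n + 1)) := by
            rw [mul_div_assoc'] at *
            rw [le_div_iff₀ hnp]
            calc s * ((n:ℝ) + 1) ≤ s * (M * k) := by nlinarith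
              _ = M * (k * s) := by ring
          nlinarith
        calc 1 + s ≤ M * (1 + k * s / (n + 1)) := h3
          _ ≤ M * Real.exp (k * s / (n + 1)) := mul_le_mul_of_nonneg_left h2 hM0.le
      calc (1 + s) ^ (n + 1) ≤ (M * Real.exp (k * s / (n + 1))) ^ (n + 1) :=
            pow_le_pow_left₀ (by linarith) h1 _
        _ = M ^ (n + 1) * Real.exp (k * s / (n + 1)) ^ (n + 1) := mul_pow _ _ _
        _ = M ^ (n + 1) * Real.exp (k * s) := by
            rw [← Real.exp_nat_mul]
            congr 2
            have : ((n:ℝ) + 1) ≠ 0 := by positivity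
            push_cast
            field_simp
    have h4 : Real.exp (-(k * s)) * (1 + s) ^ (n + 1) ≤ M ^ (n + 1) := by
      rw [Real.exp_neg]
      calc (Real.exp (k * s))⁻¹ * (1 + s) ^ (n + 1)
          ≤ (Real.exp (k * s))⁻¹ * (M ^ (n + 1) * Real.exp (k * s)) :=
            mul_le_mul_of_nonneg_left key (by positivity)
        _ = M ^ (n + 1) := by field_simp
    have h5 := (le_div_iff₀ (by positivity : (0:ℝ) < (1 + s) ^ (n + 1))).mpr h4
    rwa [div_eq_mul_inv] at h5

/-- For a positive exponential sum `W` whose Newton polytope contains the origin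
in its interior, the integral `∫_{ℝⁿ} e^{-W(t)/z} dt` converges for every `z > 0`. -/
theorem expSum_oscillatory_integrable
    {n c : ℕ} (a : Fin c → ℝ) (b : Fin c → EuclideanSpace ℝ (Fin n))
    (ha : ∀ j, 0 < a j)
    (hb : (0 : EuclideanSpace ℝ (Fin n)) ∈ interior (convexHull ℝ (Set.range b)))
    (W : EuclideanSpace ℝ (Fin n) → ℝ)
    (hW : ∀ t, W t = ∑ j, a j * Real.exp (⟪t, b j⟫))
    (z : ℝ) (hz : 0 < z) :
    Integrable (fun t : EuclideanSpace ℝ (Fin n) => Real.exp (-W t / z)) volume := by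
  -- the origin has a ball inside the convex hull
  obtain ⟨ε, hε, hball⟩ : ∃ ε > 0, Metric.ball 0 ε ⊆ convexHull ℝ (Set.range b) :=
    Metric.mem_nhds_iff.mp (mem_interior_iff_mem_nhds.mp hb)
  -- the index type is nonempty
  have hne : (Set.range b).Nonempty := by
    by_contra h
    rw [Set.not_nonempty_iff_eq_empty] at h
    rw [h, convexHull_empty, interior_empty] at hb
    exact hb
  haveI : Nonempty (Fin c) := Set.range_nonempty_iff_nonempty.mp hne
  have huniv : (Finset.univ : Finset (Fin c)).Nonempty := Finset.univ_nonempty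
  set m : ℝ := Finset.univ.inf' huniv a with hm
  have hm0 : 0 < m := by
    obtain ⟨j₀, _, hj₀⟩ := Finset.exists_mem_eq_inf' huniv a
    rw [hm, hj₀]; exact ha j₀
  have hmle : ∀ j, m ≤ a j := fun j => Finset.inf'_le a (Finset.mem_univ j)
  -- key geometric fact: some exponent sees a fraction of the norm
  have hkey : ∀ t : EuclideanSpace ℝ (Fin n), ∃ j, (ε / 2) * ‖t‖ ≤ ⟪t, b j⟫ := by
    intro t
    rcases eq_or_ne t 0 with rfl | ht
    · exact ⟨Classical.arbitrary _, by simp⟩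
    · have htn : 0 < ‖t‖ := norm_pos_iff.mpr ht
      set u : EuclideanSpace ℝ (Fin n) := (ε / (2 * ‖t‖)) • t with hu
      have hun : u ∈ Metric.ball (0 : EuclideanSpace ℝ (Fin n)) ε := by
        rw [Metric.mem_ball, dist_zero_right, hu, norm_smul, Real.norm_eq_abs,
          abs_of_pos (by positivity)]
        rw [div_mul_eq_mul_div, div_lt_iff₀ (by positivity)]
        nlinarith
      have humem : u ∈ convexHull ℝ (Set.range b) := hball hun
      have hconv : ConvexOn ℝ Set.univ (fun v : EuclideanSpace ℝ (Fin n) => ⟪t, v⟫) := by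
        refine ⟨convex_univ, fun x _ y _ α β hα hβ hαβ => ?_⟩
        simp only [inner_add_right, real_inner_smul_right]
        exact le_refl _
      obtain ⟨y, hy, hle⟩ := hconv.exists_ge_of_mem_convexHull
        (Set.subset_univ (Set.range b)) humem
      obtain ⟨j, rfl⟩ := hy
      refine ⟨j, le_trans (le_of_eq ?_) hle⟩
      rw [hu, real_inner_smul_right, real_inner_self_eq_norm_sq]
      field_simp
  -- lower bound for W
  have hWlb : ∀ t : EuclideanSpace ℝ (Fin n), m * ((ε / 2) * ‖t‖ + 1) ≤ W t := by
    intro t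
    obtain ⟨j, hj⟩ := hkey t
    have h1 : a j * Real.exp (⟪t, b j⟫) ≤ W t := by
      rw [hW t]
      exact Finset.single_le_sum (f := fun i => a i * Real.exp (⟪t, b i⟫))
        (fun i _ => mul_nonneg (ha i).le (Real.exp_nonneg _)) (Finset.mem_univ j)
    have h2 : (ε / 2) * ‖t‖ + 1 ≤ Real.exp (⟪t, b j⟫) := by
      have := Real.add_one_le_exp ((ε / 2) * ‖t‖)
      exact le_trans this (Real.exp_le_exp.mpr hj)
    calc m * ((ε / 2) * ‖t‖ + 1) ≤ a j * Real.exp (⟪t, b j⟫) := by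
          apply mul_le_mul (hmle j) h2 (by positivity) (ha j).le
      _ ≤ W t := h1
  -- conclude by domination
  set k : ℝ := m * (ε / 2) / z with hk
  have hk0 : 0 < k := by positivity
  refine ((aux_integrable_exp_neg_norm hk0).const_mul (Real.exp (-(m / z)))).mono' ?_ ?_
  · have hWc : Continuous W := by
      have : Continuous fun t : EuclideanSpace ℝ (Fin n) =>
          ∑ j, a j * Real.exp (⟪t, b j⟫) := by
        apply continuous_finset_sum
        intro j _
        exact continuous_const.mul
          (Real.continuous_exp.comp (continuous_id.inner continuous_const))
      exact this.congr fun t => (hW t).symm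
    exact (Real.continuous_exp.comp (hWc.neg.div_const z)).aestronglyMeasurable
  · refine Eventually.of_forall fun t => ?_
    rw [Real.norm_eq_abs, abs_of_pos (Real.exp_pos _), ← Real.exp_add]
    apply Real.exp_le_exp.mpr
    calc -W t / z ≤ -(m * ((ε / 2) * ‖t‖ + 1)) / z := by
          gcongr
          exact hWlb t
      _ = -(m / z) + -(k * ‖t‖) := by
          rw [hk]
          field_simp
          ring
end

section
/- Let W : ℝⁿ → ℝ be as above (a positive exponential sum with 0 in the interior of its Newton polytope, with all coefficients a_j > 0, so that W > 0) and set T = min W > 0. Define I(z) = ∫_{ℝⁿ} e^{-W(t)/z} dt for z > 0. Then for every ε > 0 there exists C > 0 such that I(z) ≤ C e^{-(T-ε)/z} for all z ∈ (0,1]. -/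
open Set Filter MeasureTheory RealInnerProductSpace

/-- Boundedness of `(1+r)^p * exp(-(m * exp(δ r)))` on `[0, ∞)`. -/
lemma expSum_aux_bdd (m δ : ℝ) (hm : 0 < m) (hδ : 0 < δ) (p : ℕ) :
    ∃ K > 0, ∀ r : ℝ, 0 ≤ r →
      (1 + r) ^ p * Real.exp (-(m * Real.exp (δ * r))) ≤ K := by
  set φ : ℝ → ℝ := fun r => (1 + r) ^ p * Real.exp (-(m * Real.exp (δ * r))) with hφ
  set c : ℝ := min m (m * δ) with hc
  have hcpos : 0 < c := lt_min hm (by positivity)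
  set ψ : ℝ → ℝ := fun r => c⁻¹ ^ p * ((c * (1 + r)) ^ p * Real.exp (-(c * (1 + r)))) with hψ
  have hψ0 : Tendsto ψ atTop (nhds 0) := by
    have hlin : Tendsto (fun r : ℝ => c * (1 + r)) atTop atTop :=
      (tendsto_atTop_add_const_left _ 1 tendsto_id).const_mul_atTop hcpos
    have h1 := (Real.tendsto_pow_mul_exp_neg_atTop_nhds_zero p).comp hlin
    have h2 := h1.const_mul (c⁻¹ ^ p)
    simpa [hψ, Function.comp] using h2
  have hbound : ∀ r : ℝ, 0 ≤ r → φ r ≤ ψ r := by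
    intro r hr
    have hexp : c * (1 + r) ≤ m * Real.exp (δ * r) := by
      have h1 : δ * r + 1 ≤ Real.exp (δ * r) := Real.add_one_le_exp _
      have h2 : c ≤ m := min_le_left _ _
      have h3 : c ≤ m * δ := min_le_right _ _
      nlinarith [Real.exp_pos (δ * r)]
    have h4 : Real.exp (-(m * Real.exp (δ * r))) ≤ Real.exp (-(c * (1 + r))) :=
      Real.exp_le_exp.2 (neg_le_neg hexp)
    have h5 : φ r ≤ (1 + r) ^ p * Real.exp (-(c * (1 + r))) := by
      apply mul_le_mul_of_nonneg_left h4 (by positivity)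
    have h6 : ψ r = (1 + r) ^ p * Real.exp (-(c * (1 + r))) := by
      show c⁻¹ ^ p * ((c * (1 + r)) ^ p * Real.exp (-(c * (1 + r)))) = _
      have hc' : c⁻¹ ^ p * (c * (1 + r)) ^ p = (1 + r) ^ p := by
        rw [mul_pow, ← mul_assoc, ← mul_pow, inv_mul_cancel₀ hcpos.ne', one_pow, one_mul]
      rw [← mul_assoc, hc']
    linarith
  obtain ⟨R, hR⟩ := (eventually_atTop).1 (hψ0.eventually (gt_mem_nhds one_pos))
  have hφcont : Continuous φ := by fun_prop
  obtain ⟨x₀, hx₀mem, hx₀⟩ := (isCompact_Icc (a := (0:ℝ)) (b := max R 0)).exists_isMaxOn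
    ⟨0, by simp⟩ hφcont.continuousOn
  refine ⟨max (φ x₀) 1, lt_of_lt_of_le one_pos (le_max_right _ _), fun r hr => ?_⟩
  by_cases h : r ≤ max R 0
  · exact (hx₀ ⟨hr, h⟩).trans (le_max_left _ _)
  · push_neg at h
    have hrR : R ≤ r := le_trans (le_max_left _ _) h.le
    have := (hbound r hr).trans (hR r hrR).le
    exact this.trans (le_max_right _ _)

/-- For a positive exponential sum `W` with `0` in the interior of its Newton polytope
and minimum value `T`, the integral `I(z) = ∫ e^{-W/z} dt` satisfies
`I(z) ≤ C e^{-(T-ε)/z}` for `z ∈ (0,1]`. -/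
theorem expSum_oscillatory_decay
    {n c : ℕ} (a : Fin c → ℝ) (b : Fin c → EuclideanSpace ℝ (Fin n))
    (ha : ∀ j, 0 < a j)
    (hb : (0 : EuclideanSpace ℝ (Fin n)) ∈ interior (convexHull ℝ (Set.range b)))
    (W : EuclideanSpace ℝ (Fin n) → ℝ)
    (hW : ∀ t, W t = ∑ j, a j * Real.exp (⟪t, b j⟫))
    (T : ℝ) (hT : IsLeast (Set.range W) T) (hTpos : 0 < T)
    (I : ℝ → ℝ)
    (hI : ∀ z, I z = ∫ t : EuclideanSpace ℝ (Fin n), Real.exp (-W t / z)) :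
    ∀ ε > 0, ∃ C > 0, ∀ z ∈ Set.Ioc (0:ℝ) 1, I z ≤ C * Real.exp (-(T - ε) / z) := by
  intro ε hε
  -- continuity of W
  have hWcont : Continuous W := by
    have hWeq : W = fun t => ∑ j, a j * Real.exp (⟪t, b j⟫) := funext hW
    rw [hWeq]
    exact continuous_finset_sum _ fun j _ =>
      continuous_const.mul (Real.continuous_exp.comp (continuous_id.inner continuous_const))
  have hTle : ∀ t, T ≤ W t := fun t => hT.2 ⟨t, rfl⟩
  -- a ball around 0 inside the Newton polytope
  obtain ⟨δ, hδpos, hball⟩ : ∃ δ > 0,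
      Metric.ball (0 : EuclideanSpace ℝ (Fin n)) δ ⊆ convexHull ℝ (Set.range b) := by
    rcases Metric.isOpen_iff.1 isOpen_interior 0 hb with ⟨δ, hδ, hsub⟩
    exact ⟨δ, hδ, hsub.trans interior_subset⟩
  have hne : Nonempty (Fin c) := by
    by_contra h
    rw [not_nonempty_iff] at h
    have hre : Set.range b = ∅ := Set.range_eq_empty b
    rw [hre, convexHull_empty, interior_empty] at hb
    exact hb
  have huniv : (Finset.univ : Finset (Fin c)).Nonempty := Finset.univ_nonempty
  -- direction bound
  have hdir : ∀ t : EuclideanSpace ℝ (Fin n), ∃ j, (δ / 2) * ‖t‖ ≤ ⟪t, b j⟫ := by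
    intro t
    by_cases ht : t = 0
    · exact ⟨Classical.arbitrary _, by simp [ht]⟩
    · have hnt : 0 < ‖t‖ := norm_pos_iff.2 ht
      set M := Finset.univ.sup' huniv (fun j => ⟪t, b j⟫) with hM
      have hlin : IsLinearMap ℝ (fun x : EuclideanSpace ℝ (Fin n) => ⟪t, x⟫) :=
        ⟨fun x y => inner_add_right t x y, fun r x => real_inner_smul_right t x r⟩
      have hhull : convexHull ℝ (Set.range b) ⊆ {x | ⟪t, x⟫ ≤ M} := by
        apply convexHull_min
        · rintro x ⟨j, rfl⟩
          exact Finset.le_sup' (fun j => (⟪t, b j⟫ : ℝ)) (Finset.mem_univ j)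
        · exact convex_halfSpace_le hlin M
      have hv : ((δ / 2) / ‖t‖) • t ∈ Metric.ball (0 : EuclideanSpace ℝ (Fin n)) δ := by
        rw [mem_ball_zero_iff, norm_smul, Real.norm_eq_abs,
          abs_of_nonneg (by positivity : (0:ℝ) ≤ (δ/2)/‖t‖), div_mul_cancel₀ _ hnt.ne']
        linarith
      have h1 : ⟪t, ((δ / 2) / ‖t‖) • t⟫ ≤ M := hhull (hball hv)
      rw [real_inner_smul_right, real_inner_self_eq_norm_mul_norm] at h1
      obtain ⟨j, _, hj⟩ := Finset.exists_mem_eq_sup' huniv (fun j => ⟪t, b j⟫)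
      refine ⟨j, ?_⟩
      rw [← hj, ← hM]
      have : (δ / 2) / ‖t‖ * (‖t‖ * ‖t‖) = (δ / 2) * ‖t‖ := by
        field_simp
      linarith [h1, this.symm.le, this.le]
  -- minimum coefficient
  set m := Finset.univ.inf' huniv a with hm
  have hmpos : 0 < m := by
    rw [hm, Finset.lt_inf'_iff]
    exact fun j _ => ha j
  have hmle : ∀ j, m ≤ a j := fun j => Finset.inf'_le _ (Finset.mem_univ j)
  -- lower bound on W
  have hWlb : ∀ t, m * Real.exp ((δ / 2) * ‖t‖) ≤ W t := by
    intro t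
    obtain ⟨j, hj⟩ := hdir t
    calc m * Real.exp ((δ / 2) * ‖t‖)
        ≤ a j * Real.exp ⟪t, b j⟫ :=
          mul_le_mul (hmle j) (Real.exp_le_exp.2 hj) (Real.exp_pos _).le (ha j).le
      _ ≤ W t := by
          rw [hW t]
          exact Finset.single_le_sum (f := fun i => a i * Real.exp (⟪t, b i⟫))
            (fun i _ => mul_nonneg (ha i).le (Real.exp_nonneg _)) (Finset.mem_univ j)
  -- integrability of exp(-W)
  obtain ⟨K, hKpos, hKb⟩ := expSum_aux_bdd m (δ / 2) hmpos (half_pos hδpos) (n + 1)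
  have hint : Integrable (fun t : EuclideanSpace ℝ (Fin n) => Real.exp (-W t)) := by
    have hdim : (Module.finrank ℝ (EuclideanSpace ℝ (Fin n)) : ℝ) < (n + 1 : ℝ) := by
      rw [finrank_euclideanSpace_fin]
      exact_mod_cast lt_add_one (n : ℝ)
    have hint0 : Integrable
        (fun t : EuclideanSpace ℝ (Fin n) => K * (1 + ‖t‖) ^ (-(n + 1 : ℝ))) :=
      (integrable_one_add_norm hdim).const_mul K
    refine hint0.mono' ((Real.continuous_exp.comp hWcont.neg).aestronglyMeasurable)
      (Eventually.of_forall fun t => ?_)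
    rw [Real.norm_eq_abs, abs_of_nonneg (Real.exp_nonneg _)]
    have hpos : (0:ℝ) < 1 + ‖t‖ := by positivity
    have hrpow : (1 + ‖t‖) ^ (-(n + 1 : ℝ)) = ((1 + ‖t‖) ^ (n + 1 : ℕ))⁻¹ := by
      rw [Real.rpow_neg hpos.le]
      congr 1
      rw [← Real.rpow_natCast (1 + ‖t‖) (n + 1)]
      norm_num
    rw [hrpow, ← div_eq_mul_inv, le_div_iff₀ (by positivity : (0:ℝ) < (1 + ‖t‖) ^ (n + 1 : ℕ))]
    · have h1 : Real.exp (-W t) ≤ Real.exp (-(m * Real.exp ((δ / 2) * ‖t‖))) :=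
        Real.exp_le_exp.2 (neg_le_neg (hWlb t))
      have h2 : (1 + ‖t‖) ^ (n + 1) * Real.exp (-(m * Real.exp ((δ / 2) * ‖t‖))) ≤ K :=
        hKb ‖t‖ (norm_nonneg t)
      calc Real.exp (-W t) * (1 + ‖t‖) ^ (n + 1)
          ≤ Real.exp (-(m * Real.exp ((δ / 2) * ‖t‖))) * (1 + ‖t‖) ^ (n + 1) :=
            mul_le_mul_of_nonneg_right h1 (by positivity)
        _ = (1 + ‖t‖) ^ (n + 1) * Real.exp (-(m * Real.exp ((δ / 2) * ‖t‖))) := mul_comm _ _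
        _ ≤ K := h2
  -- conclude
  have hIntNonneg : (0:ℝ) ≤ ∫ t : EuclideanSpace ℝ (Fin n), Real.exp (-W t) :=
    integral_nonneg fun t => (Real.exp_pos _).le
  refine ⟨Real.exp (T - ε) * (∫ t : EuclideanSpace ℝ (Fin n), Real.exp (-W t)) + 1,
    by positivity, ?_⟩
  rintro z ⟨hz0, hz1⟩
  have hpt : ∀ t, Real.exp (-W t / z) ≤
      (Real.exp (-(T - ε) / z) * Real.exp (T - ε)) * Real.exp (-W t) := by
    intro t
    rw [← Real.exp_add, ← Real.exp_add, Real.exp_le_exp]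
    have hw := hTle t
    have key : ((T - ε) - W t) / z ≤ (T - ε) - W t := by
      rw [div_le_iff₀ hz0]
      nlinarith
    have e1 : -W t / z = ((T - ε) - W t) / z + -(T - ε) / z := by ring
    rw [e1]
    linarith
  have hfi : Integrable (fun t : EuclideanSpace ℝ (Fin n) => Real.exp (-W t / z)) := by
    refine (hint.const_mul (Real.exp (-(T - ε) / z) * Real.exp (T - ε))).mono'
      ((Real.continuous_exp.comp (hWcont.neg.div_const z)).aestronglyMeasurable)
      (Eventually.of_forall fun t => ?_)
    rw [Real.norm_eq_abs, abs_of_nonneg (Real.exp_nonneg _)]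
    exact hpt t
  have hle : I z ≤ (Real.exp (-(T - ε) / z) * Real.exp (T - ε)) *
      ∫ t : EuclideanSpace ℝ (Fin n), Real.exp (-W t) := by
    rw [hI z]
    calc (∫ t : EuclideanSpace ℝ (Fin n), Real.exp (-W t / z))
        ≤ ∫ t : EuclideanSpace ℝ (Fin n),
            (Real.exp (-(T - ε) / z) * Real.exp (T - ε)) * Real.exp (-W t) :=
          integral_mono hfi (hint.const_mul _) hpt
      _ = (Real.exp (-(T - ε) / z) * Real.exp (T - ε)) *
            ∫ t : EuclideanSpace ℝ (Fin n), Real.exp (-W t) := integral_const_mul _ _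
  have hfin : (Real.exp (-(T - ε) / z) * Real.exp (T - ε)) *
      (∫ t : EuclideanSpace ℝ (Fin n), Real.exp (-W t)) ≤
      (Real.exp (T - ε) * (∫ t : EuclideanSpace ℝ (Fin n), Real.exp (-W t)) + 1) *
        Real.exp (-(T - ε) / z) := by
    have h1 : Real.exp (T - ε) * (∫ t : EuclideanSpace ℝ (Fin n), Real.exp (-W t)) ≤
        Real.exp (T - ε) * (∫ t : EuclideanSpace ℝ (Fin n), Real.exp (-W t)) + 1 := by
      linarith
    nlinarith [Real.exp_pos (-(T - ε) / z)]
  linarith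
end

section
/- Fix s ∈ ℝ and w > 0 with w ≠ s. For 0 < ε < 1 one has |log((w - s + iε)/(w - s - iε))| ≤ 2π if w ≤ s + 1, and |log((w - s + iε)/(w - s - iε))| ≤ 2/(w - s) if w ≥ s + 1. -/
open Complex Real

/-!
Write `z = (w - s) + εi`, so the ratio is `z / z̄`, a number of modulus one; its logarithm is
therefore purely imaginary with argument in `(-π, π]`, which gives the first bound. When `w > s`,
`z` lies in the right half-plane, so `z / z̄ = exp (2i arg z)` with `|2 arg z| < π` and the
logarithm equals `2i arg z`; finally `|arg z| ≤ |tan (arg z)| = ε / (w - s)`.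
-/

open ComplexConjugate

theorem Real.abs_le_abs_tan {x : ℝ} (hx : |x| < π / 2) : |x| ≤ |tan x| := by
  rcases le_total 0 x with h | h
  · rw [abs_of_nonneg h] at hx ⊢
    exact (le_tan h hx).trans (le_abs_self _)
  · rw [abs_of_nonpos h] at hx ⊢
    have := le_tan (neg_nonneg.mpr h) hx
    rw [tan_neg] at this
    exact this.trans (neg_le_abs _)

namespace Complex

theorem norm_log_le_pi_of_norm_eq_one {z : ℂ} (hz : ‖z‖ = 1) : ‖log z‖ ≤ π := by
  rw [log, hz, Real.log_one, ofReal_zero, zero_add, norm_mul, norm_I, mul_one, norm_real,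
    Real.norm_eq_abs]
  exact abs_arg_le_pi z

theorem norm_div_conj_self {z : ℂ} (hz : z ≠ 0) : ‖z / conj z‖ = 1 := by
  rw [norm_div, norm_conj, div_self (norm_ne_zero_iff.mpr hz)]

theorem div_conj_self_eq_exp {z : ℂ} (hz : z ≠ 0) : z / conj z = exp (2 * arg z * I) := by
  conv_lhs => rw [← norm_mul_exp_arg_mul_I z]
  rw [map_mul, conj_ofReal, ← exp_conj, map_mul, conj_ofReal, conj_I,
    mul_div_mul_left _ _ (by simpa using hz), ← exp_sub]
  ring_nf

theorem log_div_conj_self_of_re_pos {z : ℂ} (hz : 0 < z.re) :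
    log (z / conj z) = 2 * arg z * I := by
  have hz0 : z ≠ 0 := fun h => by simp [h] at hz
  obtain ⟨hlo, hhi⟩ := abs_lt.mp (abs_arg_lt_pi_div_two_iff.mpr (Or.inl hz))
  rw [div_conj_self_eq_exp hz0, log_exp] <;> simp <;> linarith

theorem abs_arg_le_abs_im_div_re {z : ℂ} (hz : 0 < z.re) : |arg z| ≤ |z.im| / z.re :=
  calc |arg z| ≤ |Real.tan (arg z)| :=
        Real.abs_le_abs_tan (abs_arg_lt_pi_div_two_iff.mpr (Or.inl hz))
    _ = |z.im| / z.re := by rw [tan_arg, abs_div, abs_of_pos hz]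

theorem norm_log_div_conj_self_le {z : ℂ} (hz : 0 < z.re) :
    ‖log (z / conj z)‖ ≤ 2 * |z.im| / z.re := by
  rw [log_div_conj_self_of_re_pos hz, norm_mul, norm_I, mul_one, norm_mul, Complex.norm_two, norm_real,
    Real.norm_eq_abs, mul_div_assoc]
  gcongr
  exact abs_arg_le_abs_im_div_re hz

end Complex

theorem log_ratio_bound_general (s w : ℝ)
    (ε : ℝ) (hε0 : 0 < ε) (hε1 : ε < 1) :
    (w ≤ s + 1 →
      ‖Complex.log ((((w : ℂ) - s) + ε * Complex.I) /
        (((w : ℂ) - s) - ε * Complex.I))‖ ≤ 2 * π) ∧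
    (s + 1 ≤ w →
      ‖Complex.log ((((w : ℂ) - s) + ε * Complex.I) /
        (((w : ℂ) - s) - ε * Complex.I))‖ ≤ 2 / (w - s)) := by
  set z : ℂ := ((w - s : ℝ) : ℂ) + ε * I
  have hratio : ((w : ℂ) - s + ε * I) / ((w : ℂ) - s - ε * I) = z / conj z := by
    simp [z, sub_eq_add_neg]
  have hre : z.re = w - s := by simp [z]
  have him : z.im = ε := by simp [z]
  have hz : z ≠ 0 := fun h => hε0.ne' (by simpa [h] using him.symm)
  rw [hratio]
  refine ⟨fun _ => ?_, fun hsw => ?_⟩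
  · calc ‖log (z / conj z)‖ ≤ π := norm_log_le_pi_of_norm_eq_one (norm_div_conj_self hz)
      _ ≤ 2 * π := by linarith [pi_pos]
  · calc ‖log (z / conj z)‖ ≤ 2 * |z.im| / z.re := norm_log_div_conj_self_le (by linarith)
      _ ≤ 2 / (w - s) := by
        rw [hre, him, abs_of_pos hε0]
        gcongr
        · linarith
        · linarith

/-- The uniform dominating bound for the jump computation: for `0 < ε < 1`,
`|log((w-s+iε)/(w-s-iε))| ≤ 2π` if `w ≤ s+1` and `≤ 2/(w-s)` if `w ≥ s+1`. -/
theorem log_ratio_bound (s w : ℝ) (hw : 0 < w) (hws : w ≠ s)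
    (ε : ℝ) (hε0 : 0 < ε) (hε1 : ε < 1) :
    (w ≤ s + 1 →
      ‖Complex.log ((((w : ℂ) - s) + ε * Complex.I) /
        (((w : ℂ) - s) - ε * Complex.I))‖ ≤ 2 * π) ∧
    (s + 1 ≤ w →
      ‖Complex.log ((((w : ℂ) - s) + ε * Complex.I) /
        (((w : ℂ) - s) - ε * Complex.I))‖ ≤ 2 / (w - s)) :=
  log_ratio_bound_general s w ε hε0 hε1
end

section
/- Let W : ℝⁿ → ℝ be measurable with W ≥ T > 0 and ∫ (W+1)^{-1} dx < ∞, let M > 0, and let γ be a piecewise C¹ path from -M to s in ℂ \ [T,∞). Then ∫_γ (∫_{ℝⁿ} (W(x)-s')^{-1} dx) ds' = ∫_{ℝⁿ} log((W(x)+M)/(W(x)-s)) dx, where log is the principal branch, and the value is independent of the choice of path γ in ℂ \ [T,∞). -/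
/-!
For fixed `x`, `s' ↦ -log (W x - s')` is a primitive of `(W x - s')⁻¹` on `ℂ \ [T, ∞)`, so the
path integral over `γ` of the integrand equals `log (W x + M) - log (W x - s)`, which is the
principal logarithm of the quotient because `W x + M > 0`. Interchanging the two integrals is
legitimate: the compact set `γ [0, 1]` has positive distance `δ` from `[T, ∞)` and norm at most
`R`, so `‖W x - s'‖ ≥ max δ (W x - R) ≥ (W x + 1) / (1 + (R + 1) / δ)` and the integrand is
dominated by a multiple of the integrable function `(W x + 1)⁻¹`.
-/

open Set MeasureTheory Complex intervalIntegral

namespace Complex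

lemma ofReal_sub_mem_slitPlane {T t : ℝ} {z : ℂ} (ht : T ≤ t)
    (hz : z ∉ {z : ℂ | z.im = 0 ∧ T ≤ z.re}) : (t : ℂ) - z ∈ slitPlane := by
  rw [mem_slitPlane_iff, sub_re, sub_im, ofReal_re, ofReal_im]
  by_cases him : z.im = 0
  · exact Or.inl (by linarith [not_le.mp fun h => hz ⟨him, h⟩])
  · exact Or.inr (by simpa using him)

lemma log_ofReal_div {r : ℝ} (hr : 0 < r) {z : ℂ} (hz : z ∈ slitPlane) :
    log (r / z) = log r - log z := by
  rw [div_eq_mul_inv, log_ofReal_mul hr (inv_ne_zero (slitPlane_ne_zero hz)),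
    log_inv _ (slitPlane_arg_ne_pi hz), ofReal_log hr.le, sub_eq_add_neg]

lemma _root_.IsCompact.exists_norm_inv_ofReal_sub_le {K : Set ℂ} (hK : IsCompact K) {T : ℝ}
    (hT : -1 < T) (hKT : Disjoint K {z : ℂ | z.im = 0 ∧ T ≤ z.re}) :
    ∃ C, ∀ z ∈ K, ∀ t : ℝ, T ≤ t → ‖((t : ℂ) - z)⁻¹‖ ≤ C * (t + 1)⁻¹ := by
  have hclosed : IsClosed {z : ℂ | z.im = 0 ∧ T ≤ z.re} :=
    (isClosed_eq continuous_im continuous_const).inter (isClosed_le continuous_const continuous_re)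
  obtain ⟨δ, hδ, hδK⟩ := Metric.exists_pos_forall_lt_edist hK hclosed hKT
  obtain ⟨R, hR, hRK⟩ := hK.isBounded.exists_pos_norm_le
  refine ⟨1 + (R + 1) / δ, fun z hz t ht => ?_⟩
  have hδt : (δ : ℝ) ≤ ‖(t : ℂ) - z‖ := by
    have := hδK z hz t ⟨ofReal_im t, by simpa using ht⟩
    rw [edist_nndist, ENNReal.coe_lt_coe, ← NNReal.coe_lt_coe, coe_nndist, dist_comm,
      dist_eq_norm] at this
    exact this.le
  have hlin : t + 1 ≤ (1 + (R + 1) / δ) * ‖(t : ℂ) - z‖ := by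
    have htR : t - R ≤ ‖(t : ℂ) - z‖ := by
      have := norm_sub_norm_le (t : ℂ) z
      rw [norm_real, Real.norm_eq_abs] at this
      linarith [le_abs_self t, hRK z hz]
    have hδR : R + 1 ≤ (R + 1) / δ * ‖(t : ℂ) - z‖ := by
      rw [div_mul_eq_mul_div, le_div_iff₀ (by exact_mod_cast hδ)]
      exact mul_le_mul_of_nonneg_left hδt (by linarith)
    linarith
  have ht1 : 0 < t + 1 := by linarith
  have hpos : 0 < ‖(t : ℂ) - z‖ := lt_of_lt_of_le (by exact_mod_cast hδ) hδt
  rw [norm_inv, ← div_eq_mul_inv, le_div_iff₀ ht1, inv_mul_le_iff₀ hpos, mul_comm]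
  exact hlin

lemma integral_inv_sub_mul_deriv_eq_log_sub {γ γ' : ℝ → ℂ} {a b : ℝ} {w : ℂ}
    (hγ : ∀ u ∈ uIcc a b, HasDerivAt γ (γ' u) u) (hγ' : ContinuousOn γ' (uIcc a b))
    (hw : ∀ u ∈ uIcc a b, w - γ u ∈ slitPlane) :
    ∫ u in a..b, (w - γ u)⁻¹ * γ' u = log (w - γ a) - log (w - γ b) := by
  have hderiv : ∀ u ∈ uIcc a b,
      HasDerivAt (fun u => -log (w - γ u)) ((w - γ u)⁻¹ * γ' u) u := fun u hu =>
    (((hasDerivAt_const u w).sub (hγ u hu)).clog_real (hw u hu)).neg.congr_deriv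
      (by simp only [Pi.sub_apply]; ring)
  have hcont : ContinuousOn (fun u => (w - γ u)⁻¹ * γ' u) (uIcc a b) :=
    ((continuousOn_const.sub fun u hu => (hγ u hu).continuousAt.continuousWithinAt).inv₀
      fun u hu => slitPlane_ne_zero (hw u hu)).mul hγ'
  rw [integral_eq_sub_of_hasDerivAt hderiv hcont.intervalIntegrable]
  ring

end Complex

lemma aestronglyMeasurable_inv_ofReal_sub_mul {α : Type*} [MeasurableSpace α] {μ : Measure α}
    {W : α → ℝ} (hW : Measurable W) {γ γ' : ℝ → ℂ} {S : Set ℝ} (hS : MeasurableSet S)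
    (hγ : ContinuousOn γ S) (hγ' : ContinuousOn γ' S) :
    AEStronglyMeasurable (fun p : ℝ × α => ((W p.2 : ℂ) - γ p.1)⁻¹ * γ' p.1)
      ((volume.restrict S).prod μ) :=
  (((measurable_ofReal.comp (hW.comp measurable_snd)).aestronglyMeasurable.sub
    (hγ.aestronglyMeasurable hS).comp_fst).aemeasurable.inv.mul
    (hγ'.aestronglyMeasurable hS).comp_fst.aemeasurable).aestronglyMeasurable

lemma intervalIntegral_integral_swap_of_norm_le {α E : Type*} [MeasurableSpace α]
    {μ : Measure α} [SFinite μ] [NormedAddCommGroup E] [NormedSpace ℝ E] {a b : ℝ}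
    {F : ℝ → α → E} (hF : AEStronglyMeasurable (Function.uncurry F)
      ((volume.restrict (uIoc a b)).prod μ))
    {g : α → ℝ} (hg : Integrable g μ) (hFg : ∀ u ∈ uIoc a b, ∀ x, ‖F u x‖ ≤ g x) :
    ∫ u in a..b, ∫ x, F u x ∂μ = ∫ x, (∫ u in a..b, F u x) ∂μ := by
  have : IsFiniteMeasure (volume.restrict (uIoc a b)) :=
    ⟨by rw [Measure.restrict_apply_univ]; exact measure_Ioc_lt_top⟩
  refine intervalIntegral_integral_swap ((hg.comp_snd _).mono' hF ?_)
  filter_upwards [Measure.quasiMeasurePreserving_fst.ae (ae_restrict_mem measurableSet_uIoc)]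
    with p hp
  exact hFg p.1 hp p.2

/-- The computation of `𝓜(s) = ∫_{-M}^s 𝓘̂(s') ds'` in the proof of Theorem 1:
for any (piecewise) `C¹` path `γ` from `-M` to `s` in `ℂ \ [T,∞)`,
`∫_γ (∫ (W(x)-s')⁻¹ dx) ds' = ∫ log((W(x)+M)/(W(x)-s)) dx` (principal branch);
in particular the left-hand side is independent of the choice of such a path. -/
theorem path_integral_of_hilbert_transform
    {n : ℕ} (W : EuclideanSpace ℝ (Fin n) → ℝ) (hWmeas : Measurable W)
    (T : ℝ) (hT : 0 < T) (hWT : ∀ x, T ≤ W x)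
    (hint : Integrable (fun x : EuclideanSpace ℝ (Fin n) => (W x + 1)⁻¹) volume)
    (M : ℝ) (hM : 0 < M) (s : ℂ) (hs : s ∉ {z : ℂ | z.im = 0 ∧ T ≤ z.re})
    (γ γ' : ℝ → ℂ)
    (hγ0 : γ 0 = -(M : ℂ)) (hγ1 : γ 1 = s)
    (hγrange : ∀ u ∈ Set.Icc (0:ℝ) 1, γ u ∉ {z : ℂ | z.im = 0 ∧ T ≤ z.re})
    (hγderiv : ∀ u ∈ Set.Icc (0:ℝ) 1, HasDerivAt γ (γ' u) u)
    (hγ'cont : ContinuousOn γ' (Set.Icc 0 1)) :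
    ∫ u in (0:ℝ)..1,
        (∫ x : EuclideanSpace ℝ (Fin n), ((W x : ℂ) - γ u)⁻¹) * γ' u =
      ∫ x : EuclideanSpace ℝ (Fin n),
        Complex.log (((W x : ℂ) + M) / ((W x : ℂ) - s)) := by
  have hγcont : ContinuousOn γ (Icc 0 1) := fun u hu =>
    (hγderiv u hu).continuousAt.continuousWithinAt
  have hIoc : uIoc (0:ℝ) 1 ⊆ Icc 0 1 := by rw [uIoc_of_le zero_le_one]; exact Ioc_subset_Icc_self
  have hIcc : uIcc (0:ℝ) 1 = Icc 0 1 := uIcc_of_le zero_le_one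
  obtain ⟨C, hC⟩ := (isCompact_Icc.image_of_continuousOn hγcont).exists_norm_inv_ofReal_sub_le
    (by linarith : -1 < T) (disjoint_left.2 <| by rintro _ ⟨u, hu, rfl⟩; exact hγrange u hu)
  obtain ⟨D, hD⟩ := isCompact_Icc.exists_bound_of_continuousOn hγ'cont
  have hbound : ∀ u ∈ uIoc (0:ℝ) 1, ∀ x,
      ‖((W x : ℂ) - γ u)⁻¹ * γ' u‖ ≤ C * (W x + 1)⁻¹ * D := fun u hu x => by
    have hCx := hC _ (mem_image_of_mem γ (hIoc hu)) (W x) (hWT x)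
    rw [norm_mul]
    exact mul_le_mul hCx (hD u (hIoc hu)) (norm_nonneg _) ((norm_nonneg _).trans hCx)
  calc _ = ∫ u in (0:ℝ)..1, ∫ x, ((W x : ℂ) - γ u)⁻¹ * γ' u :=
        integral_congr fun u _ => (MeasureTheory.integral_mul_const _ _).symm
    _ = ∫ x, ∫ u in (0:ℝ)..1, ((W x : ℂ) - γ u)⁻¹ * γ' u :=
        intervalIntegral_integral_swap_of_norm_le
          (aestronglyMeasurable_inv_ofReal_sub_mul hWmeas measurableSet_uIoc
            (hγcont.mono hIoc) (hγ'cont.mono hIoc))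
          ((hint.const_mul C).mul_const D) hbound
    _ = _ := integral_congr_ae <| ae_of_all _ fun x => by
        have hWM : (W x : ℂ) + M = ((W x + M : ℝ) : ℂ) := by push_cast; rfl
        dsimp only
        rw [integral_inv_sub_mul_deriv_eq_log_sub (hIcc ▸ hγderiv) (hIcc ▸ hγ'cont)
          (fun u hu => ofReal_sub_mem_slitPlane (hWT x) (hγrange u (hIcc ▸ hu))),
          hγ0, hγ1, sub_neg_eq_add, hWM,
          log_ofReal_div (by linarith [hWT x]) (ofReal_sub_mem_slitPlane (hWT x) hs)]
end
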